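/- Every FTRL dynamic guarantees constant regret: for the FTRL dynamic with regularizer h and initial state q⁰, for every continuous payoff stream p : [0,∞) → ℝ^n and every T > 0, the regret at time T is at most max_{1≤j≤n} ( h*(q⁰) − q⁰_j + h(e_j) ). -/

import Mathlib

open scoped BigOperators
open MeasureTheory

noncomputable section

/-- The standard probability simplex in ℝⁿ. -/
def simplex (n : ℕ) : Set (Fin n → ℝ) := {x | (∀ j, 0 ≤ x j) ∧ ∑ j, x j = 1}

/-- Euclidean inner product on ℝⁿ. -/
def dot {n : ℕ} (a b : Fin n → ℝ) : ℝ := ∑ j, a j * b j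

/-- The cumulative-payoff trajectory q(t) = q⁰ + ∫₀ᵗ p(τ) dτ. -/
def traj {n : ℕ} (q0 : Fin n → ℝ) (p : ℝ → Fin n → ℝ) (t : ℝ) : Fin n → ℝ :=
  q0 + ∫ τ in (0:ℝ)..t, p τ


/-!
The value function `H(q) = h*(q) = ⟨q, f q⟩ - h (f q)` has `f q` as a subgradient at every `q`
(Fenchel–Young), and `f` is continuous because the maximiser is unique; hence `H` is
differentiable with gradient `f`. Along the trajectory, `d/dt H(q(t)) = ⟨p(t), x(t)⟩`, so the
payoff collected by the dynamic up to time `T` is exactly `H(q(T)) - H(q⁰)`, while a fixed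
action `y` collects `⟨q(T) - q⁰, y⟩ ≤ H(q(T)) + h y - ⟨q⁰, y⟩`.
-/

open Filter Topology Set

lemma dot_eq_dotProduct {n : ℕ} (a b : Fin n → ℝ) : dot a b = a ⬝ᵥ b := rfl

lemma dot_single {n : ℕ} (v : Fin n → ℝ) (j : Fin n) : dot v (Pi.single j 1) = v j := by
  simp [dot_eq_dotProduct]

noncomputable def dotRight {n : ℕ} (y : Fin n → ℝ) : (Fin n → ℝ) →L[ℝ] ℝ :=
  LinearMap.toContinuousLinearMap ((dotProductBilin ℝ ℝ).flip y)

@[simp] lemma dotRight_apply {n : ℕ} (y q : Fin n → ℝ) : dotRight y q = dot q y := rfl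

lemma continuous_dotRight {n : ℕ} : Continuous (dotRight (n := n)) :=
  continuous_clm_apply.2 fun _ => continuous_const.dotProduct continuous_id

lemma single_mem_simplex {n : ℕ} (j : Fin n) : Pi.single j 1 ∈ simplex n := by
  refine ⟨fun k => ?_, by simp⟩
  by_cases hk : k = j <;> simp [hk]

lemma isCompact_simplex (n : ℕ) : IsCompact (simplex n) := by
  refine Metric.isCompact_of_isClosed_isBounded ?_ ?_
  · exact isClosed_Ici.inter (isClosed_eq (by fun_prop) continuous_const)
  · refine (Metric.isBounded_iff_subset_closedBall 0).2 ⟨1, fun x hx => ?_⟩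
    rw [mem_closedBall_zero_iff, pi_norm_le_iff_of_nonneg zero_le_one]
    intro i
    rw [Real.norm_eq_abs, abs_of_nonneg (hx.1 i), ← hx.2]
    exact Finset.single_le_sum (fun j _ => hx.1 j) (Finset.mem_univ i)

/-- Berge's maximum theorem, for a unique maximiser. -/
theorem continuous_of_isMaxOn_of_unique {Q X : Type*} [TopologicalSpace Q] [TopologicalSpace X]
    {K : Set X} (hK : IsCompact K) {Φ : Q → X → ℝ}
    (hΦ : ContinuousOn (Function.uncurry Φ) (univ ×ˢ K)) {f : Q → X} (hfK : ∀ q, f q ∈ K)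
    (hmax : ∀ q, IsMaxOn (Φ q) K (f q)) (huniq : ∀ q, ∀ y ∈ K, IsMaxOn (Φ q) K y → y = f q) :
    Continuous f := by
  refine continuous_iff_continuousAt.2 fun q => ?_
  refine hK.tendsto_nhds_of_unique_mapClusterPt (.of_forall hfK) fun y hy hclus => ?_
  refine huniq q y hy fun x hx => ?_
  by_contra hle
  have hlt : Φ q y < Φ q x := not_le.1 hle
  obtain ⟨c, hyc, hcx⟩ := exists_between hlt
  have hgraph : MapClusterPt (q, y) (𝓝 q) fun q' => (q', f q') := by
    rw [mapClusterPt_iff_frequently] at hclus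
    rw [((𝓝 q).basis_sets.prod_nhds (𝓝 y).basis_sets).mapClusterPt_iff_frequently]
    rintro ⟨U, V⟩ ⟨hU, hV⟩
    exact (hclus V hV).and_eventually hU |>.mono fun q' h => ⟨h.2, h.1⟩
  have hnear_y : ∀ᶠ z in 𝓝 (q, y), z ∈ univ ×ˢ K → Φ z.1 z.2 < c :=
    eventually_nhdsWithin_iff.1 <| (hΦ (q, y) ⟨mem_univ q, hy⟩).eventually (gt_mem_nhds hyc)
  have hnear_x : ∀ᶠ q' in 𝓝 q, c < Φ q' x :=
    ((hΦ.comp_continuous (.prodMk_left x) fun q' => ⟨mem_univ q', hx⟩).tendsto q).eventually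
      (lt_mem_nhds hcx)
  obtain ⟨q', hq'y, hq'x⟩ := (hgraph.frequently hnear_y).and_eventually hnear_x |>.exists
  exact (hq'y ⟨mem_univ q', hfK q'⟩).not_ge ((hmax q' hx).trans' hq'x.le)

theorem hasFDerivAt_of_subgradient {E : Type*} [NormedAddCommGroup E] [NormedSpace ℝ E]
    {φ : E → ℝ} {g : E → E →L[ℝ] ℝ} (hsub : ∀ y z, φ y + g y (z - y) ≤ φ z) {x : E}
    (hg : ContinuousAt g x) : HasFDerivAt φ (g x) x := by
  refine .of_isLittleO <| Asymptotics.isLittleO_iff.2 fun ε hε => ?_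
  filter_upwards [hg.eventually (Metric.closedBall_mem_nhds (g x) hε)] with y hy
  have hlow : 0 ≤ φ y - φ x - g x (y - x) := by linarith [hsub x y]
  have hup : φ y - φ x - g x (y - x) ≤ (g y - g x) (y - x) := by
    have := hsub y x
    rw [← neg_sub y x, map_neg] at this
    simp only [sub_apply]
    linarith
  rw [Real.norm_eq_abs, abs_of_nonneg hlow]
  calc φ y - φ x - g x (y - x) ≤ (g y - g x) (y - x) := hup
    _ ≤ ‖g y - g x‖ * ‖y - x‖ := (le_abs_self _).trans ((g y - g x).le_opNorm _)
    _ ≤ ε * ‖y - x‖ := by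
      gcongr
      simpa [dist_eq_norm] using hy

lemma traj_zero {n : ℕ} (q0 : Fin n → ℝ) (p : ℝ → Fin n → ℝ) : traj q0 p 0 = q0 := by
  simp [traj]

lemma hasDerivAt_traj {n : ℕ} {p : ℝ → Fin n → ℝ} (hp : Continuous p) (q0 : Fin n → ℝ) (t : ℝ) :
    HasDerivAt (traj q0 p) (p t) t :=
  (hp.integral_hasStrictDerivAt 0 t).hasDerivAt.const_add q0

lemma continuous_traj {n : ℕ} {p : ℝ → Fin n → ℝ} (hp : Continuous p) (q0 : Fin n → ℝ) :
    Continuous (traj q0 p) :=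
  continuous_iff_continuousAt.2 fun t => (hasDerivAt_traj hp q0 t).continuousAt

theorem integral_eq_sub_along_traj {n : ℕ} {Ψ : (Fin n → ℝ) → ℝ}
    {G : (Fin n → ℝ) → (Fin n → ℝ) →L[ℝ] ℝ} (hΨ : ∀ q, HasFDerivAt Ψ (G q) q) (hG : Continuous G)
    {p : ℝ → Fin n → ℝ} (hp : Continuous p) (q0 : Fin n → ℝ) (T : ℝ) :
    ∫ τ in (0:ℝ)..T, G (traj q0 p τ) (p τ) = Ψ (traj q0 p T) - Ψ q0 := by
  have hFTC := intervalIntegral.integral_eq_sub_of_hasDerivAt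
    (fun t _ => (hΨ _).comp_hasDerivAt t (hasDerivAt_traj hp q0 t))
    (((hG.comp (continuous_traj hp q0)).clm_apply hp).intervalIntegrable 0 T)
  rwa [Function.comp_apply, Function.comp_apply, traj_zero] at hFTC

/-- The conjugate `h*(q)`, evaluated at the maximiser `f q`. -/
def ftrlValue {n : ℕ} (h : (Fin n → ℝ) → ℝ) (f : (Fin n → ℝ) → (Fin n → ℝ)) (q : Fin n → ℝ) : ℝ :=
  dot q (f q) - h (f q)

section FTRL

variable {n : ℕ} {h : (Fin n → ℝ) → ℝ} {f : (Fin n → ℝ) → (Fin n → ℝ)}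
  (hf : ∀ q, f q ∈ simplex n ∧ ∀ x ∈ simplex n, dot q x - h x ≤ dot q (f q) - h (f q))
include hf

lemma continuous_ftrl (hconv : StrictConvexOn ℝ (simplex n) h)
    (hcont : ContinuousOn h (simplex n)) : Continuous f := by
  have hΦ : ContinuousOn (Function.uncurry fun q x => dot q x - h x) (univ ×ˢ simplex n) :=
    (continuous_fst.dotProduct continuous_snd).continuousOn.sub
      (hcont.comp continuousOn_snd fun z hz => hz.2)
  refine continuous_of_isMaxOn_of_unique (isCompact_simplex n) hΦ (fun q => (hf q).1)
    (fun q => (hf q).2) fun q y hy hmax => ?_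
  have hconc : StrictConcaveOn ℝ (simplex n) fun x => dot q x - h x :=
    ((dotProductBilin ℝ ℝ q).concaveOn hconv.1).sub_strictConvexOn hconv
  exact hconc.eq_of_isMaxOn hmax (hf q).2 hy (hf q).1

lemma ftrlValue_add_dotRight_le (q q' : Fin n → ℝ) :
    ftrlValue h f q + dotRight (f q) (q' - q) ≤ ftrlValue h f q' := by
  have := (hf q').2 (f q) (hf q).1
  simp only [ftrlValue, dotRight_apply, dot_eq_dotProduct, sub_dotProduct] at this ⊢
  linarith

lemma hasFDerivAt_ftrlValue (hfc : Continuous f) (q : Fin n → ℝ) :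
    HasFDerivAt (ftrlValue h f) (dotRight (f q)) q :=
  hasFDerivAt_of_subgradient (ftrlValue_add_dotRight_le hf)
    (continuous_dotRight.comp hfc).continuousAt

theorem ftrl_regret_le (hfc : Continuous f) {p : ℝ → Fin n → ℝ} (hp : Continuous p)
    (q0 : Fin n → ℝ) (T : ℝ) {y : Fin n → ℝ} (hy : y ∈ simplex n) :
    (∫ τ in (0:ℝ)..T, dot (p τ) y) - ∫ τ in (0:ℝ)..T, dot (p τ) (f (traj q0 p τ))
      ≤ ftrlValue h f q0 - dot q0 y + h y := by
  have hlin :=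
    integral_eq_sub_along_traj (fun _ => (dotRight y).hasFDerivAt) continuous_const hp q0 T
  have hval := integral_eq_sub_along_traj (hasFDerivAt_ftrlValue hf hfc)
    (continuous_dotRight.comp hfc) hp q0 T
  have hyoung := (hf (traj q0 p T)).2 y hy
  simp only [dotRight_apply] at hlin hval
  unfold ftrlValue at hval ⊢
  linarith

end FTRL

theorem ftrl_constant_regret
    (n : ℕ) [NeZero n] (h : (Fin n → ℝ) → ℝ)
    (hconv : StrictConvexOn ℝ (simplex n) h)
    (hcont : ContinuousOn h (simplex n))
    (f : (Fin n → ℝ) → (Fin n → ℝ))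
    (hf : ∀ q, f q ∈ simplex n ∧
      ∀ x ∈ simplex n, dot q x - h x ≤ dot q (f q) - h (f q))
    (q0 : Fin n → ℝ) :
    ∀ (p : ℝ → Fin n → ℝ), Continuous p → ∀ T : ℝ, 0 < T →
      (⨆ j, ∫ τ in (0:ℝ)..T, p τ j) -
        (∫ τ in (0:ℝ)..T, dot (p τ) (f (traj q0 p τ)))
      ≤ ⨆ j, ((dot q0 (f q0) - h (f q0)) - q0 j + h (Pi.single j 1)) := by
  intro p hp T _
  have hfc := continuous_ftrl hf hconv hcont
  rw [sub_le_iff_le_add]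
  refine ciSup_le fun j => ?_
  have hregret := ftrl_regret_le hf hfc hp q0 T (single_mem_simplex j)
  simp only [dot_single, ftrlValue] at hregret
  have hsup := le_ciSup (finite_range fun j =>
    (dot q0 (f q0) - h (f q0)) - q0 j + h (Pi.single j 1)).bddAbove j
  linarith
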